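/- arXiv:0712.2996 — 4 statements merged into one kernel-verified Lean document; each statement's English description precedes it below -/
import Mathlib

section
/- Let [p_n/q_n, r_n/s_n] for n ∈ ℕ be a nested sequence of closed intervals, each determined by a unimodular pair of reduced fractions, with each interval strictly contained in the previous one. Then the lengths r_n/s_n - p_n/q_n tend to 0 as n → ∞. -/
/-! The interval of a unimodular pair `p/q < r/s` has length `1/(qs)`. Strict nesting makes these
lengths strictly decrease, so the positive integers `qs` strictly increase and hence tend to
infinity. -/

open Filter Set

theorem sub_lt_sub_of_Icc_ssubset_Icc {α : Type*} [AddCommGroup α] [LinearOrder α]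
    [IsOrderedAddMonoid α] {a₁ b₁ a₂ b₂ : α} (h : Icc a₁ b₁ ⊂ Icc a₂ b₂) :
    b₁ - a₁ < b₂ - a₂ := by
  by_cases h₁ : a₁ ≤ b₁
  · obtain ⟨ha, hb⟩ := (Icc_subset_Icc_iff h₁).1 h.subset
    rcases ha.lt_or_eq with ha | rfl
    · exact (sub_le_sub_right hb a₁).trans_lt (sub_lt_sub_left ha b₂)
    rcases hb.lt_or_eq with hb | rfl
    · exact sub_lt_sub_right hb _
    · exact absurd rfl h.ne
  · have h₂ : a₂ ≤ b₂ := nonempty_Icc.1 ((nonempty_of_ssubset h).mono sdiff_subset)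
    calc b₁ - a₁ < 0 := sub_neg.2 (not_le.1 h₁)
      _ ≤ b₂ - a₂ := sub_nonneg.2 h₂

theorem Int.add_le_of_strictMono {f : ℕ → ℤ} (hf : StrictMono f) (n : ℕ) : f 0 + n ≤ f n := by
  induction n with
  | zero => simp
  | succ n ih =>
    have := hf (Nat.lt_add_one n)
    push_cast
    omega

theorem Int.tendsto_atTop_of_strictMono {f : ℕ → ℤ} (hf : StrictMono f) :
    Tendsto f atTop atTop :=
  tendsto_atTop_mono (add_le_of_strictMono hf)
    (tendsto_atTop_add_const_left _ _ tendsto_natCast_atTop_atTop)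

theorem Int.cast_div_sub_div_of_mul_sub_mul_eq_one {K : Type*} [Field K] [CharZero K]
    {p q r s : ℤ} (hq : q ≠ 0) (hs : s ≠ 0) (h : q * r - p * s = 1) :
    (r : K) / s - p / q = ((q * s : ℤ) : K)⁻¹ := by
  have h' : (q : K) * r - p * s = 1 := by exact_mod_cast h
  have hq' : (q : K) ≠ 0 := by exact_mod_cast hq
  have hs' : (s : K) ≠ 0 := by exact_mod_cast hs
  push_cast
  field_simp
  linear_combination h'

theorem nested_unimodular_intervals_length_tendsto_zero_general
    (p q r s : ℕ → ℤ)
    (hq : ∀ n, 0 < q n) (hs : ∀ n, 0 < s n)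
    (huni : ∀ n, q n * r n - p n * s n = 1)
    (hnest : ∀ n, Set.Icc ((p (n+1) : ℝ) / q (n+1)) ((r (n+1) : ℝ) / s (n+1)) ⊂
      Set.Icc ((p n : ℝ) / q n) ((r n : ℝ) / s n)) :
    Filter.Tendsto (fun n => (r n : ℝ) / s n - (p n : ℝ) / q n)
      Filter.atTop (nhds 0) := by
  have hlen n : (r n : ℝ) / s n - p n / q n = ((q n * s n : ℤ) : ℝ)⁻¹ :=
    Int.cast_div_sub_div_of_mul_sub_mul_eq_one (hq n).ne' (hs n).ne' (huni n)
  have hden_pos n : (0 : ℝ) < ((q n * s n : ℤ) : ℝ) := Int.cast_pos.2 (mul_pos (hq n) (hs n))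
  have hden_mono : StrictMono fun n => q n * s n := strictMono_nat_of_lt_succ fun n => by
    have hshorter := sub_lt_sub_of_Icc_ssubset_Icc (hnest n)
    rw [hlen, hlen] at hshorter
    exact_mod_cast (inv_lt_inv₀ (hden_pos _) (hden_pos n)).1 hshorter
  simp only [hlen]
  exact tendsto_inv_atTop_zero.comp
    (tendsto_intCast_atTop_iff.2 (Int.tendsto_atTop_of_strictMono hden_mono))

theorem nested_unimodular_intervals_length_tendsto_zero
    (p q r s : ℕ → ℤ)
    (hq : ∀ n, 0 < q n) (hs : ∀ n, 0 < s n)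
    (hpq : ∀ n, IsCoprime (p n) (q n)) (hrs : ∀ n, IsCoprime (r n) (s n))
    (hlt : ∀ n, (p n : ℝ) / q n < (r n : ℝ) / s n)
    (huni : ∀ n, q n * r n - p n * s n = 1)
    (hnest : ∀ n, Set.Icc ((p (n+1) : ℝ) / q (n+1)) ((r (n+1) : ℝ) / s (n+1)) ⊂
      Set.Icc ((p n : ℝ) / q n) ((r n : ℝ) / s n)) :
    Filter.Tendsto (fun n => (r n : ℝ) / s n - (p n : ℝ) / q n)
      Filter.atTop (nhds 0) :=
  nested_unimodular_intervals_length_tendsto_zero_general p q r s hq hs huni hnest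
end

section
/- Let x be a real quadratic irrational. Then there exists a 2×2 matrix H with integer entries such that (x, 1) is an eigenvector of H with eigenvalue λ, the other eigenvalue λ̄ satisfies 0 < λ̄ < λ. -/
/-!
Normalise the equation `c x² + d x + e = 0` so that `2 c x + d > 0`, which is possible because
`2 c x + d = 0` would make `x` rational. The integer matrix `[[-d, -e], [c, 0]]` maps `(x, 1)` to
`c x • (x, 1)`, and its eigenvalues `c x` and `-d - c x` differ by `2 c x + d`. Adding `n • 1` for an
integer `n > c x + d` makes both eigenvalues positive without changing their difference.
-/

def shiftedQuadraticMatrix (c d e n : ℤ) : Matrix (Fin 2) (Fin 2) ℤ :=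
  !![n - d, -e; c, n]

section CommRing

variable {R : Type*} [CommRing R]

theorem Matrix.mulVec_vec2 (a b c d x y : R) :
    !![a, b; c, d].mulVec ![x, y] = ![a * x + b * y, c * x + d * y] := by
  ext i
  fin_cases i <;> simp [Matrix.mulVec]

theorem shiftedQuadraticMatrix_map (c d e n : ℤ) :
    (shiftedQuadraticMatrix c d e n).map (Int.cast : ℤ → R) = !![(n : R) - d, -e; c, n] := by
  ext i j
  fin_cases i <;> fin_cases j <;> simp [shiftedQuadraticMatrix]

theorem shiftedQuadraticMatrix_mulVec {x : R} {c d e : ℤ}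
    (heq : (c : R) * x ^ 2 + d * x + e = 0) (n : ℤ) :
    ((shiftedQuadraticMatrix c d e n).map (Int.cast : ℤ → R)).mulVec ![x, 1] =
      ((c : R) * x + n) • ![x, 1] := by
  rw [shiftedQuadraticMatrix_map, Matrix.mulVec_vec2, Matrix.smul_vec2]
  congr 2
  · linear_combination -heq
  · ring

theorem shiftedQuadraticMatrix_trace (x : R) (c d e n : ℤ) :
    ((shiftedQuadraticMatrix c d e n).map (Int.cast : ℤ → R)).trace =
      ((c : R) * x + n) + (n - d - c * x) := by
  rw [shiftedQuadraticMatrix_map, Matrix.trace_fin_two_of]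
  ring

theorem shiftedQuadraticMatrix_det {x : R} {c d e : ℤ}
    (heq : (c : R) * x ^ 2 + d * x + e = 0) (n : ℤ) :
    ((shiftedQuadraticMatrix c d e n).map (Int.cast : ℤ → R)).det =
      ((c : R) * x + n) * (n - d - c * x) := by
  rw [shiftedQuadraticMatrix_map, Matrix.det_fin_two_of]
  linear_combination (c : R) * heq

end CommRing

theorem Irrational.two_mul_mul_add_ne_zero {x : ℝ} (hx : Irrational x) {c : ℤ} (hc : c ≠ 0)
    (d : ℤ) : 2 * (c : ℝ) * x + d ≠ 0 := by
  have h := (hx.intCast_mul (mul_ne_zero two_ne_zero hc)).add_intCast d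
  push_cast at h
  exact h.ne_zero

theorem Irrational.exists_quadratic_eq_zero_and_deriv_pos {x : ℝ} (hx : Irrational x)
    (hquad : ∃ c d e : ℤ, c ≠ 0 ∧ (c : ℝ) * x ^ 2 + d * x + e = 0) :
    ∃ c d e : ℤ, (c : ℝ) * x ^ 2 + d * x + e = 0 ∧ 0 < 2 * (c : ℝ) * x + d := by
  obtain ⟨c, d, e, hc, heq⟩ := hquad
  rcases (hx.two_mul_mul_add_ne_zero hc d).lt_or_gt with hneg | hpos
  · exact ⟨-c, -d, -e, by push_cast; linear_combination -heq, by push_cast; linarith⟩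
  · exact ⟨c, d, e, heq, hpos⟩

theorem quadratic_irrational_eigenvector_matrix (x : ℝ) (hx : Irrational x)
    (hquad : ∃ c d e : ℤ, c ≠ 0 ∧ (c : ℝ) * x ^ 2 + d * x + e = 0) :
    ∃ (H : Matrix (Fin 2) (Fin 2) ℤ) (lam lamBar : ℝ),
      (H.map (Int.cast : ℤ → ℝ)).mulVec ![x, 1] = lam • ![x, 1] ∧
      0 < lamBar ∧ lamBar < lam ∧
      (H.map (Int.cast : ℤ → ℝ)).trace = lam + lamBar ∧
      (H.map (Int.cast : ℤ → ℝ)).det = lam * lamBar := by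
  obtain ⟨c, d, e, heq, hgap⟩ := hx.exists_quadratic_eq_zero_and_deriv_pos hquad
  obtain ⟨n, hn⟩ := exists_int_gt ((c : ℝ) * x + d)
  exact ⟨shiftedQuadraticMatrix c d e n, c * x + n, n - d - c * x,
    shiftedQuadraticMatrix_mulVec heq n, by linarith, by linarith,
    shiftedQuadraticMatrix_trace x c d e n, shiftedQuadraticMatrix_det heq n⟩
end

section
/- Let H be a 2×2 real matrix with eigenvalues λ > λ̄ > 0, with corresponding eigenvectors v (for λ) and w (for λ̄). Let C be a closed convex cone in ℝ² spanned positively by two linearly independent vectors, such that v ∈ C and w ∉ C ∪ (−C). Then H maps C into C. -/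
/-!
Since `w` is not a multiple of `v ∈ C`, the eigenvectors form a basis, and writing
`z = α v + β w` gives `H z = λ̄ z + (λ - λ̄) α v`. So `H z ∈ C` as soon as `α ≥ 0`. If `α < 0` for
some `z ∈ C`, then `z - α v = β w` lies in `C`; as `w ∉ C ∪ (-C)` this forces `β = 0`, and then
`z` and `-z` both lie in the pointed cone `C`, so `z = 0` and `α = 0`.
-/

open Module

section ConeSpan

variable (𝕜 : Type*) {E : Type*} [Field 𝕜] [LinearOrder 𝕜] [IsStrictOrderedRing 𝕜]
  [AddCommGroup E] [Module 𝕜 E]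

def coneSpan (u₁ u₂ : E) : Set E :=
  {z | ∃ a b : 𝕜, 0 ≤ a ∧ 0 ≤ b ∧ z = a • u₁ + b • u₂}

variable {𝕜} {u₁ u₂ v w z : E}

theorem smul_mem_coneSpan {t : 𝕜} (ht : 0 ≤ t) (hz : z ∈ coneSpan 𝕜 u₁ u₂) :
    t • z ∈ coneSpan 𝕜 u₁ u₂ := by
  obtain ⟨a, b, ha, hb, rfl⟩ := hz
  exact ⟨t * a, t * b, mul_nonneg ht ha, mul_nonneg ht hb, by simp only [smul_add, mul_smul]⟩

theorem add_mem_coneSpan (hv : v ∈ coneSpan 𝕜 u₁ u₂) (hw : w ∈ coneSpan 𝕜 u₁ u₂) :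
    v + w ∈ coneSpan 𝕜 u₁ u₂ := by
  obtain ⟨a, b, ha, hb, rfl⟩ := hv
  obtain ⟨c, d, hc, hd, rfl⟩ := hw
  exact ⟨a + c, b + d, add_nonneg ha hc, add_nonneg hb hd, by simp only [add_smul]; abel⟩

theorem eq_zero_of_mem_coneSpan_of_neg_mem (hu : LinearIndependent 𝕜 ![u₁, u₂])
    (hz : z ∈ coneSpan 𝕜 u₁ u₂) (hnz : -z ∈ coneSpan 𝕜 u₁ u₂) : z = 0 := by
  obtain ⟨a, b, ha, hb, rfl⟩ := hz
  obtain ⟨c, d, hc, hd, hcd⟩ := hnz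
  obtain ⟨hac, hbd⟩ := LinearIndependent.pair_iff.mp hu (a + c) (b + d) <| by
    linear_combination (norm := module) -hcd
  rw [show a = 0 by linarith, show b = 0 by linarith, zero_smul, zero_smul, add_zero]

theorem mem_or_neg_mem_of_smul_mem_coneSpan {t : 𝕜} (ht : t ≠ 0)
    (h : t • w ∈ coneSpan 𝕜 u₁ u₂) : w ∈ coneSpan 𝕜 u₁ u₂ ∨ -w ∈ coneSpan 𝕜 u₁ u₂ := by
  rcases ht.lt_or_gt with ht | ht
  · right
    simpa [smul_smul, ht.ne] using smul_mem_coneSpan (inv_nonneg.mpr (neg_nonneg.mpr ht.le)) h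
  · left
    simpa [smul_smul, ht.ne'] using smul_mem_coneSpan (inv_nonneg.mpr ht.le) h

theorem linearIndependent_pair_of_mem_coneSpan (hv0 : v ≠ 0) (hv : v ∈ coneSpan 𝕜 u₁ u₂)
    (hw : w ∉ coneSpan 𝕜 u₁ u₂) (hnw : -w ∉ coneSpan 𝕜 u₁ u₂) : LinearIndependent 𝕜 ![v, w] := by
  refine (LinearIndependent.pair_iff' hv0).mpr fun a hav => ?_
  rcases le_or_gt 0 a with ha | ha
  · exact hw (hav ▸ smul_mem_coneSpan ha hv)
  · exact hnw (by simpa [← hav] using smul_mem_coneSpan (neg_nonneg.mpr ha.le) hv)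

theorem coeff_nonneg_of_mem_coneSpan (hu : LinearIndependent 𝕜 ![u₁, u₂]) (hv0 : v ≠ 0)
    (hv : v ∈ coneSpan 𝕜 u₁ u₂) (hw : w ∉ coneSpan 𝕜 u₁ u₂) (hnw : -w ∉ coneSpan 𝕜 u₁ u₂)
    {α β : 𝕜} (hz : α • v + β • w ∈ coneSpan 𝕜 u₁ u₂) : 0 ≤ α := by
  by_contra! hα
  have hβw : β • w ∈ coneSpan 𝕜 u₁ u₂ := by
    rw [show β • w = (α • v + β • w) + (-α) • v by module]
    exact add_mem_coneSpan hz (smul_mem_coneSpan (neg_nonneg.mpr hα.le) hv)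
  rcases eq_or_ne β 0 with rfl | hβ
  · rw [zero_smul, add_zero] at hz
    have hnz : -(α • v) ∈ coneSpan 𝕜 u₁ u₂ := by
      simpa using smul_mem_coneSpan (neg_nonneg.mpr hα.le) hv
    have := eq_zero_of_mem_coneSpan_of_neg_mem hu hz hnz
    exact hα.ne (smul_eq_zero.mp this |>.resolve_right hv0)
  · exact (mem_or_neg_mem_of_smul_mem_coneSpan hβ hβw).elim hw hnw

end ConeSpan

theorem LinearIndependent.exists_eq_smul_add_smul_of_finrank_eq_two {K V : Type*} [DivisionRing K]
    [AddCommGroup V] [Module K V] {v w : V} (h : LinearIndependent K ![v, w])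
    (hV : finrank K V = 2) (z : V) : ∃ α β : K, α • v + β • w = z := by
  have hspan := h.span_eq_top_of_card_eq_finrank (by simp [hV])
  rw [Matrix.range_cons_cons_empty] at hspan
  exact Submodule.mem_span_pair.mp (hspan ▸ Submodule.mem_top)

theorem LinearMap.apply_smul_add_smul_of_eigenvectors {R M : Type*} [CommRing R] [AddCommGroup M]
    [Module R M] (f : M →ₗ[R] M) {v w : M} {a b : R} (hv : f v = a • v) (hw : f w = b • w)
    (α β : R) : f (α • v + β • w) = b • (α • v + β • w) + ((a - b) * α) • v := by
  rw [map_add, map_smul, map_smul, hv, hw]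
  module

theorem mapsTo_coneSpan_of_eigenvectors {𝕜 E : Type*} [Field 𝕜] [LinearOrder 𝕜]
    [IsStrictOrderedRing 𝕜] [AddCommGroup E] [Module 𝕜 E] (hE : finrank 𝕜 E = 2)
    (f : E →ₗ[𝕜] E) {a b : 𝕜} {u₁ u₂ v w : E} (hb : 0 ≤ b) (hba : b ≤ a) (hv0 : v ≠ 0)
    (hfv : f v = a • v) (hfw : f w = b • w) (hu : LinearIndependent 𝕜 ![u₁, u₂])
    (hv : v ∈ coneSpan 𝕜 u₁ u₂) (hw : w ∉ coneSpan 𝕜 u₁ u₂) (hnw : -w ∉ coneSpan 𝕜 u₁ u₂) :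
    Set.MapsTo f (coneSpan 𝕜 u₁ u₂) (coneSpan 𝕜 u₁ u₂) := by
  intro z hz
  obtain ⟨α, β, rfl⟩ := (linearIndependent_pair_of_mem_coneSpan hv0 hv hw hnw
    ).exists_eq_smul_add_smul_of_finrank_eq_two hE z
  have hα : 0 ≤ α := coeff_nonneg_of_mem_coneSpan hu hv0 hv hw hnw hz
  rw [f.apply_smul_add_smul_of_eigenvectors hfv hfw]
  exact add_mem_coneSpan (smul_mem_coneSpan hb hz)
    (smul_mem_coneSpan (mul_nonneg (sub_nonneg.mpr hba) hα) hv)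

theorem cone_mapsto_self (H : Matrix (Fin 2) (Fin 2) ℝ)
    (lam lamBar : ℝ) (v w u₁ u₂ : Fin 2 → ℝ)
    (hlam : 0 < lamBar) (hlt : lamBar < lam)
    (hv : v ≠ 0) (hHv : H.mulVec v = lam • v)
    (hHw : H.mulVec w = lamBar • w)
    (hu : LinearIndependent ℝ ![u₁, u₂])
    (C : Set (Fin 2 → ℝ))
    (hC : C = {z | ∃ a b : ℝ, 0 ≤ a ∧ 0 ≤ b ∧ z = a • u₁ + b • u₂})
    (hvC : v ∈ C) (hwC : w ∉ C ∪ (-C)) :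
    ∀ z ∈ C, H.mulVec z ∈ C := by
  change C = coneSpan ℝ u₁ u₂ at hC
  subst hC
  rw [Set.mem_union, Set.mem_neg, not_or] at hwC
  exact mapsTo_coneSpan_of_eigenvectors (by simp) H.mulVecLin hlam.le hlt.le hv hHv hHw hu hvC
    hwC.1 hwC.2
end

section
/- For the ordinary Gauss map, an irrational x ∈ (0,1) has an eventually periodic sequence of partial quotients (a_n) if and only if x is a quadratic irrational. -/
/-!
Write `xₙ = G^[n] x` and `pₙ / qₙ` for the convergents of the digit sequence. Then
`x = (pₙ + pₙ₋₁ xₙ) / (qₙ + qₙ₋₁ xₙ)` with `pₙ₋₁ qₙ - qₙ₋₁ pₙ = ±1`, hence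
`|pₙ - qₙ x| ≤ 1 / qₙ₊₁`.

If the digits are eventually periodic, two points with the same digits have the same
convergents, so `x_{t+r} = x_t`. Then `x_t` is a fixed point of an integral Möbius map, hence
a root of an integral quadratic, and this passes back to `x` along `y = 1 / (a + G y)`.

Conversely, let `f = c X² + d X Y + e Y²` be integral with `f(x, 1) = 0`. Then `xₙ` is a root
of `f(pₙ₋₁ X + pₙ, qₙ₋₁ X + qₙ)`, which has the discriminant of `f`, and whose outer
coefficients `f(pₖ, qₖ) = qₖ (pₖ - qₖ x)(2 c x + d) + c (pₖ - qₖ x)²` are bounded. So all `xₙ`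
are roots of finitely many quadratics, and two of them coincide.
-/

open Function Set

noncomputable def gaussMap (y : ℝ) : ℝ := Int.fract y⁻¹

noncomputable def gaussDigit (x : ℝ) (n : ℕ) : ℤ := ⌊(gaussMap^[n] x)⁻¹⌋

lemma irrational_gaussMap {y : ℝ} (hy : Irrational y) : Irrational (gaussMap y) :=
  hy.inv.sub_intCast _

lemma gaussMap_mem_Ioo {y : ℝ} (hy : Irrational y) : gaussMap y ∈ Ioo 0 1 :=
  ⟨Int.fract_pos.2 (hy.inv.ne_int _), Int.fract_lt_one _⟩

lemma mul_floor_inv_add_gaussMap {y : ℝ} (hy : y ≠ 0) : y * (⌊y⁻¹⌋ + gaussMap y) = 1 := by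
  rw [gaussMap, Int.floor_add_fract, mul_inv_cancel₀ hy]

lemma one_le_floor_inv {y : ℝ} (hy : y ∈ Ioo 0 1) : 1 ≤ ⌊y⁻¹⌋ :=
  Int.le_floor.2 (by simpa using (one_le_inv₀ hy.1).2 hy.2.le)

section Orbit

variable {x : ℝ}

lemma irrational_iterate_gaussMap (hx : Irrational x) (n : ℕ) : Irrational (gaussMap^[n] x) := by
  induction n with
  | zero => exact hx
  | succ n ih => rw [iterate_succ_apply']; exact irrational_gaussMap ih

lemma iterate_gaussMap_mem_Ioo (hx : Irrational x) (hx01 : x ∈ Ioo 0 1) (n : ℕ) :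
    gaussMap^[n] x ∈ Ioo 0 1 := by
  cases n with
  | zero => exact hx01
  | succ n => rw [iterate_succ_apply']; exact gaussMap_mem_Ioo (irrational_iterate_gaussMap hx n)

lemma one_le_gaussDigit (hx : Irrational x) (hx01 : x ∈ Ioo 0 1) (n : ℕ) : 1 ≤ gaussDigit x n :=
  one_le_floor_inv (iterate_gaussMap_mem_Ioo hx hx01 n)

lemma iterate_gaussMap_mul (hx : Irrational x) (n : ℕ) :
    gaussMap^[n] x * (gaussDigit x n + gaussMap^[n + 1] x) = 1 := by
  rw [iterate_succ_apply']
  exact mul_floor_inv_add_gaussMap (irrational_iterate_gaussMap hx n).ne_zero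

lemma gaussDigit_iterate (m n : ℕ) : gaussDigit (gaussMap^[m] x) n = gaussDigit x (n + m) := by
  rw [gaussDigit, gaussDigit, iterate_add_apply]

end Orbit

/-- With `p₋₁ = 1, p₀ = 0, q₋₁ = 0, q₀ = 1` and `p_{k+1} = p_{k-1} + a k * p_k`, these are
`cfNum a n = p_{n-1}` and `cfDen a n = q_{n-1}`, so that `cfNum a (n + 1) / cfDen a (n + 1)` is the
convergent `[0; a 0, …, a (n - 1)]`. -/
def cfNum (a : ℕ → ℤ) : ℕ → ℤ
  | 0 => 1
  | 1 => 0
  | n + 2 => cfNum a n + a n * cfNum a (n + 1)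

def cfDen (a : ℕ → ℤ) : ℕ → ℤ
  | 0 => 0
  | 1 => 1
  | n + 2 => cfDen a n + a n * cfDen a (n + 1)

section Continuants

variable {a : ℕ → ℤ}

lemma cfNum_add_two (n : ℕ) : cfNum a (n + 2) = cfNum a n + a n * cfNum a (n + 1) := rfl

lemma cfDen_add_two (n : ℕ) : cfDen a (n + 2) = cfDen a n + a n * cfDen a (n + 1) := rfl

lemma cfNum_mul_cfDen_succ_sub (n : ℕ) :
    cfNum a n * cfDen a (n + 1) - cfDen a n * cfNum a (n + 1) = (-1) ^ n := by
  induction n with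
  | zero => rfl
  | succ n ih =>
    rw [cfNum_add_two, cfDen_add_two, pow_succ]
    linear_combination -ih

lemma cfDen_nonneg_and_le_succ (ha : ∀ n, 1 ≤ a n) (n : ℕ) :
    0 ≤ cfDen a n ∧ cfDen a n ≤ cfDen a (n + 1) := by
  induction n with
  | zero => exact ⟨le_rfl, zero_le_one⟩
  | succ n ih =>
    obtain ⟨h0, h1⟩ := ih
    refine ⟨h0.trans h1, ?_⟩
    rw [cfDen_add_two]
    nlinarith [ha n]

lemma monotone_cfDen (ha : ∀ n, 1 ≤ a n) : Monotone (cfDen a) :=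
  monotone_nat_of_le_succ fun n => (cfDen_nonneg_and_le_succ ha n).2

lemma one_le_cfDen_succ (ha : ∀ n, 1 ≤ a n) (n : ℕ) : 1 ≤ cfDen a (n + 1) :=
  monotone_cfDen ha (Nat.le_add_left 1 n)

lemma le_cfDen_succ (ha : ∀ n, 1 ≤ a n) (n : ℕ) : (n : ℤ) ≤ cfDen a (n + 1) := by
  induction n with
  | zero => exact zero_le_one
  | succ n ih =>
    rw [cfDen_add_two]
    have hq : 1 ≤ cfDen a n ∨ n = 0 := by
      rcases n with _ | n
      · exact .inr rfl
      · exact .inl (one_le_cfDen_succ ha n)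
    rcases hq with hq | rfl
    · push_cast; nlinarith [ha n]
    · simpa [cfDen] using ha 0

variable {w : ℕ → ℝ}

lemma cfDen_mul_eq_cfNum (hw : ∀ n, w n * (a n + w (n + 1)) = 1) (n : ℕ) :
    (cfDen a (n + 1) + cfDen a n * w n) * w 0 = cfNum a (n + 1) + cfNum a n * w n := by
  induction n with
  | zero => simp [cfNum, cfDen]
  | succ n ih =>
    rw [cfNum_add_two, cfDen_add_two]
    push_cast
    linear_combination (a n + w (n + 1)) * ih
      + (cfNum a n - cfDen a n * w 0) * hw n

lemma abs_cfNum_sub_mul_le (ha : ∀ n, 1 ≤ a n) (hw : ∀ n, w n * (a n + w (n + 1)) = 1)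
    (hpos : ∀ n, 0 < w n) (n : ℕ) :
    |cfNum a n - cfDen a n * w 0| * cfDen a (n + 1) ≤ 1 := by
  have hdet : ((cfNum a n * cfDen a (n + 1) - cfDen a n * cfNum a (n + 1) : ℤ) : ℝ)
      = (-1) ^ n := by
    exact_mod_cast cfNum_mul_cfDen_succ_sub n
  push_cast at hdet
  set D := (cfDen a (n + 1) : ℝ) + cfDen a n * w n
  have hδ : (cfNum a n - cfDen a n * w 0) * D = (-1) ^ n := by
    linear_combination (-(cfDen a n : ℝ)) * cfDen_mul_eq_cfNum hw n + hdet
  have hq1 : (1 : ℝ) ≤ cfDen a (n + 1) := by exact_mod_cast one_le_cfDen_succ ha n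
  have hqD : (cfDen a (n + 1) : ℝ) ≤ D := by
    have : (0 : ℝ) ≤ cfDen a n := by exact_mod_cast (cfDen_nonneg_and_le_succ ha n).1
    nlinarith [hpos n]
  calc _ ≤ |cfNum a n - cfDen a n * w 0| * D := by gcongr
    _ = 1 := by rw [← abs_of_pos (by linarith : 0 < D), ← abs_mul, hδ, abs_neg_one_pow]

lemma abs_cfNum_sub_le_one (ha : ∀ n, 1 ≤ a n)
    (hw : ∀ n, w n * (a n + w (n + 1)) = 1) (hpos : ∀ n, 0 < w n) (n : ℕ) :
    |cfNum a n - cfDen a n * w 0| ≤ 1 ∧ |cfDen a n * (cfNum a n - cfDen a n * w 0)| ≤ 1 := by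
  have h := abs_cfNum_sub_mul_le ha hw hpos n
  obtain ⟨hq0, hq⟩ := cfDen_nonneg_and_le_succ ha n
  have h1 : (1 : ℝ) ≤ cfDen a (n + 1) := by exact_mod_cast one_le_cfDen_succ ha n
  have hq0' : (0 : ℝ) ≤ cfDen a n := by exact_mod_cast hq0
  have hq' : (cfDen a n : ℝ) ≤ cfDen a (n + 1) := by exact_mod_cast hq
  have habs := abs_nonneg ((cfNum a n : ℝ) - cfDen a n * w 0)
  rw [abs_mul, abs_of_nonneg hq0']
  constructor <;> nlinarith

end Continuants

theorem eq_of_gaussDigit_eq {y z : ℝ} (hy : Irrational y) (hy01 : y ∈ Ioo 0 1)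
    (hz : Irrational z) (hz01 : z ∈ Ioo 0 1) (h : gaussDigit y = gaussDigit z) : y = z := by
  have ha := one_le_gaussDigit hy hy01
  have hbound : ∀ n : ℕ, n * |y - z| ≤ 2 := by
    rintro (_ | n)
    · simp
    have hy' := abs_cfNum_sub_mul_le ha (iterate_gaussMap_mul hy)
      (fun k => (iterate_gaussMap_mem_Ioo hy hy01 k).1) (n + 1)
    have hz' := abs_cfNum_sub_mul_le (one_le_gaussDigit hz hz01) (iterate_gaussMap_mul hz)
      (fun k => (iterate_gaussMap_mem_Ioo hz hz01 k).1) (n + 1)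
    rw [← h] at hz'
    simp only [iterate_zero_apply] at hy' hz'
    set p := cfNum (gaussDigit y)
    set q := cfDen (gaussDigit y)
    have hq1 : (1 : ℝ) ≤ q (n + 1) := by exact_mod_cast one_le_cfDen_succ ha n
    have hqn : ((n + 1 : ℕ) : ℝ) ≤ q (n + 1 + 1) := by exact_mod_cast le_cfDen_succ ha (n + 1)
    have htri :
        q (n + 1) * |y - z| ≤ |p (n + 1) - q (n + 1) * y| + |p (n + 1) - q (n + 1) * z| :=
      calc q (n + 1) * |y - z| = |q (n + 1) * (y - z)| := by
            rw [abs_mul, abs_of_pos (by linarith : (0 : ℝ) < q (n + 1))]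
        _ = |(p (n + 1) - q (n + 1) * z) - (p (n + 1) - q (n + 1) * y)| := by ring_nf
        _ ≤ _ := (abs_sub _ _).trans_eq (add_comm _ _)
    calc ((n + 1 : ℕ) : ℝ) * |y - z| ≤ q (n + 1 + 1) * (q (n + 1) * |y - z|) := by
          gcongr
          · linarith
          · exact le_mul_of_one_le_left (abs_nonneg _) hq1
      _ ≤ q (n + 1 + 1) * (|p (n + 1) - q (n + 1) * y| + |p (n + 1) - q (n + 1) * z|) := by
          gcongr; linarith
      _ ≤ 2 := by linarith
  by_contra hne
  have hpos : 0 < |y - z| := abs_pos.2 (sub_ne_zero.2 hne)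
  obtain ⟨n, hn⟩ := exists_nat_gt (2 / |y - z|)
  rw [div_lt_iff₀ hpos] at hn
  linarith [hbound n]

def IsQuadratic (x : ℝ) : Prop := ∃ c d e : ℤ, c ≠ 0 ∧ (c : ℝ) * x ^ 2 + d * x + e = 0

lemma Irrational.eq_zero_of_mul_add_eq_zero {y : ℝ} (hy : Irrational y) {b c : ℤ}
    (h : (b : ℝ) * y + c = 0) : b = 0 := by
  by_contra hb
  exact (hy.intCast_mul hb).ne_int (-c) (by push_cast; linarith)

lemma IsQuadratic.of_gaussMap {y : ℝ} (hy : Irrational y) (h : IsQuadratic (gaussMap y)) :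
    IsQuadratic y := by
  obtain ⟨c, d, e, hc, hz⟩ := h
  set a := ⌊y⁻¹⌋
  have hy2 :
      ((c * a ^ 2 - d * a + e : ℤ) : ℝ) * y ^ 2 + ((d - 2 * c * a : ℤ) : ℝ) * y + c = 0 := by
    push_cast
    linear_combination y ^ 2 * hz
      - (c * (1 - a * y + y * gaussMap y) + d * y) * mul_floor_inv_add_gaussMap hy.ne_zero
  refine ⟨_, _, _, fun h0 => hc ?_, hy2⟩
  rw [h0, Int.cast_zero, zero_mul, zero_add] at hy2
  rw [hy.eq_zero_of_mul_add_eq_zero hy2, Int.cast_zero, zero_mul, zero_add] at hy2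
  exact_mod_cast hy2

lemma IsQuadratic.of_iterate_gaussMap {x : ℝ} (hx : Irrational x) (n : ℕ)
    (h : IsQuadratic (gaussMap^[n] x)) : IsQuadratic x := by
  induction n with
  | zero => exact h
  | succ n ih =>
    rw [iterate_succ_apply'] at h
    exact ih (h.of_gaussMap (irrational_iterate_gaussMap hx n))

lemma IsQuadratic.of_isPeriodicPt {y : ℝ} (hy : Irrational y) (hy01 : y ∈ Ioo 0 1) {r : ℕ}
    (hr : 1 ≤ r) (h : IsPeriodicPt gaussMap r y) : IsQuadratic y := by
  have hinv := cfDen_mul_eq_cfNum (iterate_gaussMap_mul hy) r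
  simp only [iterate_zero_apply, h.eq] at hinv
  set a := gaussDigit y
  refine ⟨cfDen a r, cfDen a (r + 1) - cfNum a r, -cfNum a (r + 1), ?_, ?_⟩
  · obtain ⟨k, rfl⟩ := Nat.exists_eq_add_of_le' hr
    exact (Int.lt_iff_add_one_le.2 (one_le_cfDen_succ (one_le_gaussDigit hy hy01) k)).ne'
  · push_cast
    linear_combination hinv

def quadForm (c d e X Y : ℤ) : ℤ := c * X ^ 2 + d * X * Y + e * Y ^ 2

lemma exists_quadratic_of_moebius {c d e p q p' q' : ℤ} {x w : ℝ}
    (hx : (c : ℝ) * x ^ 2 + d * x + e = 0) (hxw : (q' + q * w) * x = p' + p * w) :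
    ∃ B : ℤ, discrim (quadForm c d e p q) B (quadForm c d e p' q')
        = (p * q' - q * p') ^ 2 * discrim c d e ∧
      (quadForm c d e p q : ℝ) * w ^ 2 + B * w + quadForm c d e p' q' = 0 := by
  refine ⟨2 * c * p * p' + d * (p * q' + q * p') + 2 * e * q * q', ?_, ?_⟩
  · simp only [discrim, quadForm]
    ring
  simp only [quadForm]
  push_cast
  linear_combination (q' + q * w) ^ 2 * hx
    - (c * (p' + p * w + (q' + q * w) * x) + d * (q' + q * w)) * hxw

lemma abs_quadForm_le {c d e p q : ℤ} {x : ℝ} (hx : (c : ℝ) * x ^ 2 + d * x + e = 0)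
    (h1 : |p - q * x| ≤ 1) (h2 : |q * (p - q * x)| ≤ 1) :
    |(quadForm c d e p q : ℝ)| ≤ |2 * c * x + d| + |(c : ℝ)| := by
  have hid : (quadForm c d e p q : ℝ)
      = q * (p - q * x) * (2 * c * x + d) + c * (p - q * x) ^ 2 := by
    simp only [quadForm]
    push_cast
    linear_combination q ^ 2 * hx
  rw [hid]
  refine (abs_add_le _ _).trans (add_le_add ?_ ?_)
  · rw [abs_mul]
    exact mul_le_of_le_one_left (abs_nonneg _) h2
  · rw [abs_mul, abs_pow]
    exact mul_le_of_le_one_right (abs_nonneg _) (pow_le_one₀ (abs_nonneg _) h1)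

lemma quadForm_ne_zero {c d e p q : ℤ} {x : ℝ} (hx : Irrational x) (hc : c ≠ 0)
    (hroot : (c : ℝ) * x ^ 2 + d * x + e = 0) (hq : q ≠ 0) : quadForm c d e p q ≠ 0 := by
  intro h0
  have h0' : (quadForm c d e p q : ℝ) = 0 := by exact_mod_cast h0
  have hfac : ((q : ℝ) * x + (-p : ℤ)) * (((c * q : ℤ) : ℝ) * x + (c * p + d * q : ℤ)) = 0 := by
    simp only [quadForm] at h0'
    push_cast at h0' ⊢
    linear_combination q ^ 2 * hroot - h0'
  rcases mul_eq_zero.1 hfac with h | h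
  · exact hq (hx.eq_zero_of_mul_add_eq_zero h)
  · exact mul_ne_zero hc hq (hx.eq_zero_of_mul_add_eq_zero h)

lemma abs_le_of_discrim {A B C M : ℤ} (hA : |A| ≤ M) (hC : |C| ≤ M) :
    |B| ≤ |discrim A B C| + 4 * M ^ 2 := by
  have hAC : A * C ≤ M ^ 2 :=
    calc A * C ≤ |A| * |C| := (le_abs_self _).trans_eq (abs_mul _ _)
      _ ≤ M ^ 2 := by rw [sq]; exact mul_le_mul hA hC (abs_nonneg _) ((abs_nonneg _).trans hA)
  have := Int.le_self_sq |B|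
  rw [sq_abs] at this
  have := le_abs_self (discrim A B C)
  rw [discrim] at *
  linarith

lemma finite_setOf_quadratic_root {A B C : ℤ} (hA : A ≠ 0) :
    {y : ℝ | (A : ℝ) * y ^ 2 + B * y + C = 0}.Finite := by
  have hdeg := Polynomial.natDegree_quadratic (R := ℝ) (b := B) (c := C) (Int.cast_ne_zero.2 hA)
  refine (Polynomial.finite_setOfPred_isRoot
    (p := .C (A : ℝ) * .X ^ 2 + .C (B : ℝ) * .X + .C (C : ℝ)) ?_).subset ?_
  · rintro h
    rw [h, Polynomial.natDegree_zero] at hdeg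
    exact two_ne_zero hdeg.symm
  · intro y hy
    simpa using hy

lemma finite_setOf_bounded_quadratic_root (K : ℤ) :
    {y : ℝ | ∃ A B C : ℤ, A ≠ 0 ∧ |A| ≤ K ∧ |B| ≤ K ∧ |C| ≤ K ∧
      (A : ℝ) * y ^ 2 + B * y + C = 0}.Finite := by
  have hbox := (finite_Icc (-K) K).prod ((finite_Icc (-K) K).prod (finite_Icc (-K) K))
  refine ((hbox.inter_of_left {t | t.1 ≠ 0}).biUnion
    fun t ht => finite_setOf_quadratic_root (B := t.2.1) (C := t.2.2) ht.2).subset ?_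
  rintro y ⟨A, B, C, hA, hAK, hBK, hCK, hy⟩
  exact mem_biUnion (x := (A, B, C)) ⟨⟨abs_le.1 hAK, abs_le.1 hBK, abs_le.1 hCK⟩, hA⟩ hy

section QuadraticOrbit

variable {x : ℝ}

theorem exists_bound_quadratic_iterate_gaussMap (hx : Irrational x) (hx01 : x ∈ Ioo 0 1)
    (hq : IsQuadratic x) :
    ∃ K : ℤ, ∀ n, ∃ A B C : ℤ, A ≠ 0 ∧ |A| ≤ K ∧ |B| ≤ K ∧ |C| ≤ K ∧
      (A : ℝ) * (gaussMap^[n + 1] x) ^ 2 + B * gaussMap^[n + 1] x + C = 0 := by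
  obtain ⟨c, d, e, hc, hroot⟩ := hq
  set a := gaussDigit x
  have ha := one_le_gaussDigit hx hx01
  have hw := iterate_gaussMap_mul hx
  have hpos k := (iterate_gaussMap_mem_Ioo hx hx01 k).1
  obtain ⟨M, hM⟩ : ∃ M : ℤ, |2 * c * x + d| + |(c : ℝ)| ≤ M := ⟨_, Int.le_ceil _⟩
  have hform k : |quadForm c d e (cfNum a k) (cfDen a k)| ≤ M := by
    obtain ⟨h1, h2⟩ := abs_cfNum_sub_le_one ha hw hpos k
    exact_mod_cast (abs_quadForm_le hroot h1 h2).trans hM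
  have hM0 : 0 ≤ M := (abs_nonneg _).trans (hform 0)
  refine ⟨|discrim c d e| + 4 * M ^ 2 + M, fun n => ?_⟩
  obtain ⟨B, hdisc, hB⟩ := exists_quadratic_of_moebius hroot (cfDen_mul_eq_cfNum hw (n + 1))
  rw [cfNum_mul_cfDen_succ_sub, ← pow_mul, pow_mul', neg_one_sq, one_pow, one_mul] at hdisc
  have hBK := abs_le_of_discrim (B := B) (hform (n + 1)) (hform (n + 1 + 1))
  rw [hdisc] at hBK
  have hq : cfDen a (n + 1) ≠ 0 := (Int.lt_iff_add_one_le.2 (one_le_cfDen_succ ha n)).ne'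
  refine ⟨_, B, _, quadForm_ne_zero hx hc hroot hq, ?_, by linarith, ?_, hB⟩
  · linarith [hform (n + 1), abs_nonneg (discrim c d e), sq_nonneg M]
  · linarith [hform (n + 1 + 1), abs_nonneg (discrim c d e), sq_nonneg M]

theorem exists_isPeriodicPt_of_isQuadratic (hx : Irrational x) (hx01 : x ∈ Ioo 0 1)
    (hq : IsQuadratic x) : ∃ t r, 1 ≤ r ∧ IsPeriodicPt gaussMap r (gaussMap^[t] x) := by
  obtain ⟨K, hK⟩ := exists_bound_quadratic_iterate_gaussMap hx hx01 hq
  obtain ⟨i, j, hij, hEq⟩ :=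
    (finite_setOf_bounded_quadratic_root K).exists_lt_map_eq_of_forall_mem
      (f := fun n => gaussMap^[n + 1] x) hK
  refine ⟨i + 1, j - i, by omega, ?_⟩
  change gaussMap^[j - i] (gaussMap^[i + 1] x) = gaussMap^[i + 1] x
  rw [← iterate_add_apply, show j - i + (i + 1) = j + 1 by omega]
  exact hEq.symm

theorem gaussDigit_eventually_periodic_iff (hx : Irrational x) (hx01 : x ∈ Ioo 0 1) :
    (∃ t r, 1 ≤ r ∧ ∀ n ≥ t, gaussDigit x (n + r) = gaussDigit x n) ↔
      ∃ t r, 1 ≤ r ∧ IsPeriodicPt gaussMap r (gaussMap^[t] x) := by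
  constructor
  · rintro ⟨t, r, hr, h⟩
    refine ⟨t, r, hr, ?_⟩
    change gaussMap^[r] (gaussMap^[t] x) = gaussMap^[t] x
    rw [← iterate_add_apply]
    refine eq_of_gaussDigit_eq (irrational_iterate_gaussMap hx _)
      (iterate_gaussMap_mem_Ioo hx hx01 _) (irrational_iterate_gaussMap hx _)
      (iterate_gaussMap_mem_Ioo hx hx01 _) (funext fun n => ?_)
    rw [gaussDigit_iterate, gaussDigit_iterate, show n + (r + t) = n + t + r by omega]
    exact h _ le_add_self
  · rintro ⟨t, r, hr, h⟩
    refine ⟨t, r, hr, fun n hn => ?_⟩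
    obtain ⟨k, rfl⟩ := Nat.exists_eq_add_of_le hn
    rw [gaussDigit, gaussDigit, add_comm (t + k) r, iterate_add_apply, add_comm t k,
      iterate_add_apply, (h.apply_iterate k).eq]

end QuadraticOrbit

/-- Lagrange's theorem: an irrational in (0,1) has eventually periodic partial
quotients iff it is a quadratic irrational. Here `G = fun y => Int.fract y⁻¹`
is the Gauss map and the n-th partial quotient (n ≥ 1) is `⌊(G^[n-1] x)⁻¹⌋`. -/
theorem lagrange_theorem (x : ℝ) (hx : x ∈ Set.Ioo (0 : ℝ) 1)
    (hirr : Irrational x) :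
    (∃ t : ℕ, ∃ r : ℕ, 1 ≤ r ∧ ∀ n ≥ t,
        ⌊((fun y : ℝ => Int.fract y⁻¹)^[n + r] x)⁻¹⌋
          = ⌊((fun y : ℝ => Int.fract y⁻¹)^[n] x)⁻¹⌋) ↔
      ∃ c d e : ℤ, c ≠ 0 ∧ (c : ℝ) * x ^ 2 + d * x + e = 0 := by
  change (∃ t r, 1 ≤ r ∧ ∀ n ≥ t, gaussDigit x (n + r) = gaussDigit x n) ↔ IsQuadratic x
  rw [gaussDigit_eventually_periodic_iff hirr hx]
  constructor
  · rintro ⟨t, r, hr, hper⟩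
    exact .of_iterate_gaussMap hirr t <| .of_isPeriodicPt (irrational_iterate_gaussMap hirr t)
      (iterate_gaussMap_mem_Ioo hirr hx t) hr hper
  · exact exists_isPeriodicPt_of_isQuadratic hirr hx
end
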